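/- In the one-round Thompson sampling setup, assume additionally that the expected losses are linear: there exist maps v : Θ → ℝ^d and φ : Fin K → ℝ^d such that ℓ(θ,a) = ⟨v(θ), φ(a)⟩ for all θ and a. Then the squared regret satisfies R² ≤ (d/2)·I; equivalently, the lifted information ratio of Thompson sampling with d-dimensional linear expected losses taking values in [0,1] is at most d/2. -/

import Mathlib

/-!
Write `π a` for the probability that `a⋆ = a` and
`c a b = ∑_{a⋆ θ = a} μ θ (ℓ̄ b - ℓ θ b)`, so that `R = ∑ a, c a a`. Each row `c a` is a convergent
mixture of the linear loss vectors `ℓ θ = ⟪v θ, φ ·⟫`, hence itself of the form `⟪u a, φ ·⟫`.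
Cauchy–Schwarz in the inner product of the regularised design operator
`T = ε + ∑ b, π b φ b φ bᵀ`, together with `tr (T⁻¹ (T - ε)) ≤ d`, gives
`R² ≤ d ∑ a, ∑ b, π b (c a b)² / π a` in the limit `ε → 0`. Cauchy–Schwarz inside the fibre
`{a⋆ = a}` bounds `(c a b)²` by `π a` times the part of the variance of `ℓ · b` carried by that
fibre, so the right side is at most `d ∑ b, π b Var(ℓ · b)`, and Pinsker's inequality
`g(p‖q) ≥ 2 (p - q)²` bounds this by `d I / 2`.
-/

/-- Binary relative entropy `g(p‖q)` (with Lean's conventions `log 0 = 0`,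
`0/0 = 0`, realizing `0 · log 0 = 0`). -/
noncomputable def binRelEnt (p q : ℝ) : ℝ :=
  p * Real.log (p / q) + (1 - p) * Real.log ((1 - p) / (1 - q))

open Set Finset Module InnerProductSpace Filter Topology
open scoped RealInnerProductSpace

section Pinsker

open Real

lemma binRelEnt_self (p : ℝ) : binRelEnt p p = 0 := by
  by_cases hp : p = 0
  · simp [binRelEnt, hp]
  by_cases hp1 : 1 - p = 0
  · simp [binRelEnt, hp1, div_self hp]
  simp [binRelEnt, div_self hp, div_self hp1]

lemma binRelEnt_one_sub (p q : ℝ) : binRelEnt (1 - p) (1 - q) = binRelEnt p q := by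
  simp only [binRelEnt, sub_sub_cancel]
  ring

lemma continuousAt_mul_log_div {c t : ℝ} (h : t = 0 → c = 0) :
    ContinuousAt (fun t => c * log (c / t)) t := by
  by_cases hc : c = 0
  · simp only [hc, zero_mul]
    exact continuousAt_const
  have ht : t ≠ 0 := fun ht => hc (h ht)
  exact continuousAt_const.mul
    ((continuousAt_const.div continuousAt_id ht).log (div_ne_zero hc ht))

lemma hasDerivAt_mul_log_div (c : ℝ) {t : ℝ} (ht : t ≠ 0) :
    HasDerivAt (fun t => c * log (c / t)) (-c / t) t := by
  by_cases hc : c = 0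
  · simp only [hc, zero_mul, neg_zero, zero_div]
    exact hasDerivAt_const t 0
  have h := ((hasDerivAt_log ht).const_mul c).const_sub (c * log c)
  refine (h.congr_deriv (by ring)).congr_of_eventuallyEq ?_
  filter_upwards [eventually_ne_nhds ht] with x hx
  rw [log_div hc hx, mul_sub]

lemma continuousAt_binRelEnt_right {p t : ℝ} (h0 : t = 0 → p = 0) (h1 : t = 1 → p = 1) :
    ContinuousAt (binRelEnt p) t :=
  (continuousAt_mul_log_div h0).add <|
    (continuousAt_mul_log_div (c := 1 - p) fun ht => by simp [h1 (by linarith)]).comp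
      (continuousAt_const.sub continuousAt_id)

lemma hasDerivAt_binRelEnt_right (p : ℝ) {t : ℝ} (ht0 : t ≠ 0) (ht1 : t ≠ 1) :
    HasDerivAt (binRelEnt p) ((t - p) / (t * (1 - t))) t := by
  have ht1' : 1 - t ≠ 0 := sub_ne_zero.mpr (Ne.symm ht1)
  have := (hasDerivAt_mul_log_div p ht0).add
    ((hasDerivAt_mul_log_div (1 - p) ht1').comp t ((hasDerivAt_id t).const_sub 1))
  refine this.congr_deriv ?_
  field_simp
  ring

lemma two_mul_sq_sub_le_binRelEnt_of_le {p q : ℝ} (hp : 0 ≤ p) (hpq : p ≤ q) (hq : q < 1) :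
    2 * (p - q) ^ 2 ≤ binRelEnt p q := by
  set F : ℝ → ℝ := fun t => binRelEnt p t - 2 * (p - t) ^ 2
  have hmono : MonotoneOn F (Icc p q) := by
    refine monotoneOn_of_hasDerivWithinAt_nonneg (f' := fun t => (t - p) * (1 / (t * (1 - t)) - 4))
      (convex_Icc p q) ?_ ?_ ?_
    · intro t ht
      refine ContinuousAt.continuousWithinAt (ContinuousAt.sub ?_ (by fun_prop))
      exact continuousAt_binRelEnt_right (fun h => by linarith [ht.1]) (fun h => by linarith [ht.2])
    · intro t ht
      rw [interior_Icc] at ht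
      have ht0 : 0 < t := hp.trans_lt ht.1
      have ht1 : t < 1 := ht.2.trans hq
      have := (hasDerivAt_binRelEnt_right p ht0.ne' ht1.ne).sub
        ((((hasDerivAt_id t).const_sub p).pow 2).const_mul 2)
      refine (this.congr_deriv ?_).hasDerivWithinAt
      field_simp
      simp
      ring
    · intro t ht
      rw [interior_Icc] at ht
      have ht0 : 0 < t := hp.trans_lt ht.1
      have ht1 : t < 1 := ht.2.trans hq
      have h4 : 4 ≤ 1 / (t * (1 - t)) := by
        rw [le_div_iff₀ (by nlinarith)]
        nlinarith [sq_nonneg (2 * t - 1)]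
      exact mul_nonneg (by linarith [ht.1]) (by linarith)
  have := hmono (left_mem_Icc.2 hpq) (right_mem_Icc.2 hpq) hpq
  simp only [F, binRelEnt_self, sub_self] at this
  linarith

lemma two_mul_sq_sub_le_binRelEnt {p q : ℝ} (hp : p ∈ Icc (0 : ℝ) 1) (hq : q ∈ Ioo (0 : ℝ) 1) :
    2 * (p - q) ^ 2 ≤ binRelEnt p q := by
  rcases le_total p q with hpq | hqp
  · exact two_mul_sq_sub_le_binRelEnt_of_le hp.1 hpq hq.2
  · have := two_mul_sq_sub_le_binRelEnt_of_le (p := 1 - p) (q := 1 - q) (by linarith [hp.2])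
      (by linarith) (by linarith [hq.1])
    rw [binRelEnt_one_sub] at this
    linarith

lemma mul_log_div_le_inv {c r : ℝ} (hc0 : 0 ≤ c) (hc1 : c ≤ 1) (hr : 0 < r) :
    c * log (c / r) ≤ r⁻¹ := by
  rcases hc0.eq_or_lt with rfl | hc
  · simpa using hr.le
  have := log_le_sub_one_of_pos (div_pos hc hr)
  calc c * log (c / r) ≤ c * (c / r - 1) := mul_le_mul_of_nonneg_left this hc0
    _ ≤ c * c / r := by rw [mul_sub, mul_div_assoc]; linarith
    _ ≤ r⁻¹ := by
      rw [inv_eq_one_div]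
      gcongr
      nlinarith

lemma binRelEnt_le_inv_add_inv {p q : ℝ} (hp : p ∈ Icc (0 : ℝ) 1) (hq : q ∈ Ioo (0 : ℝ) 1) :
    binRelEnt p q ≤ q⁻¹ + (1 - q)⁻¹ :=
  add_le_add (mul_log_div_le_inv hp.1 hp.2 hq.1)
    (mul_log_div_le_inv (by linarith [hp.2]) (by linarith [hp.1]) (by linarith [hq.2]))

end Pinsker

section DesignOperator

variable {E ι : Type*} [NormedAddCommGroup E] [InnerProductSpace ℝ E]

lemma exists_inner_eq_tsum_mul [Finite ι] {Θ : Type*} (φ : ι → E) {w : Θ → ℝ} {x : Θ → ι → ℝ}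
    (hx : ∀ θ, ∃ v, ∀ b, x θ b = ⟪v, φ b⟫) (hs : ∀ b, Summable fun θ => w θ * x θ b) :
    ∃ u : E, ∀ b, ⟪u, φ b⟫ = ∑' θ, w θ * x θ b := by
  let F : E →ₗ[ℝ] ι → ℝ := LinearMap.pi fun b => (innerₗ E).flip (φ b)
  have hxF : ∀ θ, x θ ∈ LinearMap.range F := fun θ => by
    obtain ⟨v, hv⟩ := hx θ
    exact ⟨v, funext fun b => (hv b).symm⟩
  have hmem : ∑' θ, w θ • x θ ∈ LinearMap.range F :=
    tsum_mem (Submodule.closed_of_finiteDimensional _) fun θ => Submodule.smul_mem _ _ (hxF θ)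
  obtain ⟨u, hu⟩ := hmem
  refine ⟨u, fun b => ?_⟩
  have hb := congrFun hu b
  rw [tsum_apply (f := fun θ => w θ • x θ) (Pi.summable.2 hs)] at hb
  rw [real_inner_comm]
  simpa [F] using hb

lemma LinearMap.IsPositive.real_inner_sq_le {T : E →ₗ[ℝ] E} (hT : T.IsPositive) (x y : E) :
    ⟪T x, y⟫ ^ 2 ≤ ⟪T x, x⟫ * ⟪T y, y⟫ := by
  have hsymm : ⟪T y, x⟫ = ⟪T x, y⟫ := by rw [hT.isSymmetric, real_inner_comm]
  have hquad : ∀ t : ℝ, 0 ≤ ⟪T y, y⟫ * (t * t) + 2 * ⟪T x, y⟫ * t + ⟪T x, x⟫ := by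
    intro t
    have := hT.inner_nonneg_left (x + t • y)
    simp only [map_add, map_smul, inner_add_left, inner_add_right, real_inner_smul_left,
      real_inner_smul_right, hsymm] at this
    linarith
  have := discrim_le_zero hquad
  rw [discrim] at this
  nlinarith

variable [Fintype ι]

-- Regularised so as to be invertible; the estimates derived from it survive `ε → 0`.
noncomputable def designOp (ε : ℝ) (w : ι → ℝ) (φ : ι → E) : E →ₗ[ℝ] E :=
  ε • 1 + ∑ b, w b • (rankOne ℝ (φ b) (φ b) : E →ₗ[ℝ] E)

variable {ε : ℝ} {w : ι → ℝ} {φ : ι → E}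

lemma designOp_apply (x : E) :
    designOp ε w φ x = ε • x + ∑ b, (w b * ⟪φ b, x⟫) • φ b := by
  simp [designOp, smul_smul]

lemma inner_designOp_self (x : E) :
    ⟪designOp ε w φ x, x⟫ = ε * ‖x‖ ^ 2 + ∑ b, w b * ⟪x, φ b⟫ ^ 2 := by
  simp only [designOp_apply, inner_add_left, sum_inner, real_inner_smul_left,
    real_inner_self_eq_norm_sq, real_inner_comm x (φ _), mul_assoc, sq]

lemma isPositive_designOp (hε : 0 ≤ ε) (hw : ∀ a, 0 ≤ w a) : (designOp ε w φ).IsPositive :=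
  (LinearMap.isPositive_one.smul_of_nonneg hε).add <| LinearMap.isPositive_sum _ fun b _ =>
    ((ContinuousLinearMap.isPositive_toLinearMap_iff _).2
      (InnerProductSpace.isPositive_rankOne_self _)).smul_of_nonneg (hw b)

lemma designOp_injective (hε : 0 < ε) (hw : ∀ a, 0 ≤ w a) :
    Function.Injective (designOp ε w φ) := by
  rw [← LinearMap.ker_eq_bot, Submodule.eq_bot_iff]
  intro x hx
  have h := inner_designOp_self (ε := ε) (w := w) (φ := φ) x
  rw [LinearMap.mem_ker.1 hx, inner_zero_left] at h
  have : 0 ≤ ∑ b, w b * ⟪x, φ b⟫ ^ 2 := sum_nonneg fun b _ => mul_nonneg (hw b) (sq_nonneg _)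
  have : ‖x‖ ^ 2 = 0 := by nlinarith [sq_nonneg ‖x‖]
  simpa using this

lemma sum_mul_inner_designOp_symm_le_finrank [FiniteDimensional ℝ E] (hε : 0 < ε)
    (hw : ∀ a, 0 ≤ w a) (e : E ≃ₗ[ℝ] E) (he : (e : E →ₗ[ℝ] E) = designOp ε w φ) :
    ∑ a, w a * ⟪φ a, e.symm (φ a)⟫ ≤ finrank ℝ E := by
  -- The left side is the trace of `e⁻¹ ∘ (e - ε) = 1 - ε e⁻¹`, and `e⁻¹` is positive.
  have hdecomp : 1 - ε • (e.symm : E →ₗ[ℝ] E) =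
      ∑ a, w a • (innerₛₗ ℝ (φ a)).smulRight (e.symm (φ a)) := by
    ext x
    apply e.injective
    have hx : e x = designOp ε w φ x := LinearMap.congr_fun he x
    simp [map_sum, hx, designOp, smul_smul]
  have htr := congrArg (LinearMap.trace ℝ E) hdecomp
  simp only [map_sum, map_smul, LinearMap.trace_smulRight, map_sub, LinearMap.trace_one,
    smul_eq_mul, innerₛₗ_apply_apply] at htr
  have h0 := (LinearEquiv.isPositive_symm_iff.2 (he ▸ isPositive_designOp hε.le hw)).trace_nonneg
  nlinarith

lemma sq_sum_inner_le_finrank_mul_designOp [FiniteDimensional ℝ E] (hε : 0 < ε)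
    (hw : ∀ a, 0 ≤ w a) (u : ι → E) (hu : ∀ a, w a = 0 → ⟪u a, φ a⟫ = 0) :
    (∑ a, ⟪u a, φ a⟫) ^ 2 ≤ finrank ℝ E * ∑ a, ⟪designOp ε w φ (u a), u a⟫ / w a := by
  set T := designOp ε w φ
  have hT : T.IsPositive := isPositive_designOp hε.le hw
  set e := LinearEquiv.ofInjectiveEndo T (designOp_injective hε hw)
  have hTz : ∀ a, T (e.symm (φ a)) = φ a := fun a => e.apply_symm_apply (φ a)
  calc (∑ a, ⟪u a, φ a⟫) ^ 2
      ≤ (∑ a, ⟪T (u a), u a⟫ / w a) * ∑ a, w a * ⟪φ a, e.symm (φ a)⟫ := by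
        refine sum_sq_le_sum_mul_sum_of_sq_le_mul _
          (fun a _ => div_nonneg (hT.inner_nonneg_left _) (hw a))
          (fun a _ => mul_nonneg (hw a) ?_) fun a _ => ?_
        · simpa only [hTz] using hT.inner_nonneg_left (e.symm (φ a))
        rcases (hw a).eq_or_lt with h | h
        · simp [hu a h.symm, ← h]
        have hcs := hT.real_inner_sq_le (e.symm (φ a)) (u a)
        rw [hTz, real_inner_comm] at hcs
        calc ⟪u a, φ a⟫ ^ 2 ≤ ⟪φ a, e.symm (φ a)⟫ * ⟪T (u a), u a⟫ := hcs
          _ = ⟪T (u a), u a⟫ / w a * (w a * ⟪φ a, e.symm (φ a)⟫) := by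
            field_simp [h.ne']
    _ ≤ finrank ℝ E * ∑ a, ⟪T (u a), u a⟫ / w a := by
        rw [mul_comm]
        exact mul_le_mul_of_nonneg_right
          (sum_mul_inner_designOp_symm_le_finrank hε hw e
            (LinearMap.coe_injective (LinearEquiv.coe_ofInjectiveEndo _ _)))
          (sum_nonneg fun a _ => div_nonneg (hT.inner_nonneg_left _) (hw a))

-- A term with `w a = 0` is `0` on the right (`x / 0 = 0`); `hu` makes it `0` on the left too.
theorem sq_sum_inner_le_finrank_mul [FiniteDimensional ℝ E] (hw : ∀ a, 0 ≤ w a)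
    (u : ι → E) (hu : ∀ a, w a = 0 → ⟪u a, φ a⟫ = 0) :
    (∑ a, ⟪u a, φ a⟫) ^ 2 ≤ finrank ℝ E * ∑ a, (∑ b, w b * ⟪u a, φ b⟫ ^ 2) / w a := by
  have hlim : Tendsto
      (fun ε => (finrank ℝ E : ℝ) * ∑ a, (ε * ‖u a‖ ^ 2 + ∑ b, w b * ⟪u a, φ b⟫ ^ 2) / w a)
      (𝓝[>] 0) (𝓝 ((finrank ℝ E : ℝ) * ∑ a, (∑ b, w b * ⟪u a, φ b⟫ ^ 2) / w a)) := by
    refine tendsto_nhdsWithin_of_tendsto_nhds ?_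
    simpa using (by fun_prop : Continuous fun ε : ℝ =>
      (finrank ℝ E : ℝ) * ∑ a, (ε * ‖u a‖ ^ 2 + ∑ b, w b * ⟪u a, φ b⟫ ^ 2) / w a).tendsto 0
  refine ge_of_tendsto hlim (eventually_nhdsWithin_of_forall fun ε hε => ?_)
  simpa only [inner_designOp_self] using sq_sum_inner_le_finrank_mul_designOp hε hw u hu

end DesignOperator

section Fibers

variable {Θ ι : Type*}

lemma summable_mul_of_abs_le {w h : Θ → ℝ} (hw : Summable w) (hw0 : ∀ θ, 0 ≤ w θ) {C : ℝ}
    (hC : ∀ θ, |h θ| ≤ C) : Summable fun θ => w θ * h θ :=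
  (hw.mul_right C).of_norm_bounded fun θ => by
    rw [Real.norm_eq_abs, abs_mul, abs_of_nonneg (hw0 θ)]
    exact mul_le_mul_of_nonneg_left (hC θ) (hw0 θ)

lemma sq_tsum_mul_le {w x : Θ → ℝ} (hw0 : ∀ θ, 0 ≤ w θ) (hw : Summable w)
    (hwx : Summable fun θ => w θ * x θ) (hwx2 : Summable fun θ => w θ * x θ ^ 2) :
    (∑' θ, w θ * x θ) ^ 2 ≤ (∑' θ, w θ) * ∑' θ, w θ * x θ ^ 2 := by
  refine le_of_tendsto (hwx.hasSum.pow 2) (Eventually.of_forall fun s => ?_)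
  calc (∑ θ ∈ s, w θ * x θ) ^ 2 ≤ (∑ θ ∈ s, w θ) * ∑ θ ∈ s, w θ * x θ ^ 2 :=
        sum_sq_le_sum_mul_sum_of_sq_le_mul s (fun θ _ => hw0 θ)
          (fun θ _ => mul_nonneg (hw0 θ) (sq_nonneg _))
          fun θ _ => (by ring : (w θ * x θ) ^ 2 = _).le
    _ ≤ (∑' θ, w θ) * ∑' θ, w θ * x θ ^ 2 :=
        mul_le_mul (hw.sum_le_tsum s fun θ _ => hw0 θ)
          (hwx2.sum_le_tsum s fun θ _ => mul_nonneg (hw0 θ) (sq_nonneg _))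
          (sum_nonneg fun θ _ => mul_nonneg (hw0 θ) (sq_nonneg _)) (tsum_nonneg hw0)

noncomputable def fiberMass (μ : Θ → ℝ) (f : Θ → ι) (a : ι) : ℝ :=
  ∑' θ, (f ⁻¹' {a}).indicator μ θ

lemma fiberMass_nonneg {μ : Θ → ℝ} (f : Θ → ι) (hμ0 : ∀ θ, 0 ≤ μ θ) (a : ι) :
    0 ≤ fiberMass μ f a :=
  tsum_nonneg fun θ => indicator_nonneg (fun θ _ => hμ0 θ) θ

variable [Fintype ι]

lemma tsum_mul_apply_eq_sum_tsum_indicator {μ : Θ → ℝ} (f : Θ → ι) {h : Θ → ι → ℝ}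
    (hs : ∀ a, Summable fun θ => μ θ * h θ a) :
    ∑' θ, μ θ * h θ (f θ) = ∑ a, ∑' θ, (f ⁻¹' {a}).indicator μ θ * h θ a := by
  have hpt : ∀ θ, μ θ * h θ (f θ) = ∑ a, (f ⁻¹' {a}).indicator μ θ * h θ a := fun θ => by
    rw [sum_eq_single (f θ) (fun a _ ha => by simp [Ne.symm ha]) (by simp)]
    simp
  rw [tsum_congr hpt, Summable.tsum_finsetSum fun a _ => ?_]
  exact ((hs a).indicator _).congr fun θ => indicator_mul_left _ _ _

variable {μ : Θ → ℝ} {f : Θ → ι}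

lemma tsum_mul_comp_eq_sum_fiberMass (hμ : Summable μ) (g : ι → ℝ) :
    ∑' θ, μ θ * g (f θ) = ∑ a, fiberMass μ f a * g a := by
  rw [tsum_mul_apply_eq_sum_tsum_indicator f (h := fun _ a => g a) fun a => hμ.mul_right (g a)]
  simp only [fiberMass, tsum_mul_right]

lemma sum_fiberMass (hμ : HasSum μ 1) : ∑ a, fiberMass μ f a = 1 := by
  simpa [hμ.tsum_eq] using (tsum_mul_comp_eq_sum_fiberMass (f := f) hμ.summable 1).symm

lemma tsum_tsum_mul_mul_comp (hμ : Summable μ) {F : Θ → ι → ℝ}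
    (hF : ∀ b, Summable fun θ => μ θ * F θ b) :
    ∑' θ, ∑' θ', μ θ * μ θ' * F θ (f θ') = ∑ b, fiberMass μ f b * ∑' θ, μ θ * F θ b := by
  have hin : ∀ θ, ∑' θ', μ θ * μ θ' * F θ (f θ') = ∑ b, fiberMass μ f b * (μ θ * F θ b) := by
    intro θ
    simp_rw [mul_assoc, tsum_mul_left]
    rw [tsum_mul_comp_eq_sum_fiberMass hμ (F θ), mul_sum]
    exact sum_congr rfl fun b _ => by ring
  rw [tsum_congr hin, Summable.tsum_finsetSum fun b _ => (hF b).mul_left _]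
  simp_rw [tsum_mul_left]

end Fibers

section OneRound

variable {Θ ι : Type*}

noncomputable def fiberGap (μ : Θ → ℝ) (f : Θ → ι) (ℓ : Θ → ι → ℝ) (lbar : ι → ℝ) (a b : ι) : ℝ :=
  ∑' θ, (f ⁻¹' {a}).indicator μ θ * (lbar b - ℓ θ b)

variable {μ : Θ → ℝ} {f : Θ → ι} {ℓ : Θ → ι → ℝ} {lbar : ι → ℝ}

lemma fiberGap_sq_le (hμ0 : ∀ θ, 0 ≤ μ θ) (hμ : Summable μ) {C : ℝ}
    (hC : ∀ θ b, |ℓ θ b - lbar b| ≤ C) (a b : ι) :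
    fiberGap μ f ℓ lbar a b ^ 2 ≤
      fiberMass μ f a * ∑' θ, (f ⁻¹' {a}).indicator μ θ * (ℓ θ b - lbar b) ^ 2 := by
  have hw0 : ∀ θ, 0 ≤ (f ⁻¹' {a}).indicator μ θ := indicator_nonneg fun θ _ => hμ0 θ
  have hw := hμ.indicator (f ⁻¹' {a})
  have h := sq_tsum_mul_le hw0 hw
    (summable_mul_of_abs_le hw hw0 (h := fun θ => lbar b - ℓ θ b) fun θ => by
      rw [abs_sub_comm]; exact hC θ b)
    (summable_mul_of_abs_le hw hw0 (C := C ^ 2) fun θ => by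
      rw [abs_pow, abs_sub_comm]; exact pow_le_pow_left₀ (abs_nonneg _) (hC θ b) 2)
  simpa only [fiberGap, fiberMass, sub_sq_comm (lbar b)] using h

lemma fiberGap_eq_zero_of_fiberMass_eq_zero (hμ0 : ∀ θ, 0 ≤ μ θ) (hμ : Summable μ) {C : ℝ}
    (hC : ∀ θ b, |ℓ θ b - lbar b| ≤ C) {a : ι} (ha : fiberMass μ f a = 0) (b : ι) :
    fiberGap μ f ℓ lbar a b = 0 := by
  have h := fiberGap_sq_le (f := f) hμ0 hμ hC a b
  rw [ha, zero_mul] at h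
  exact pow_eq_zero_iff two_ne_zero |>.1 (le_antisymm h (sq_nonneg _))

lemma exists_inner_eq_fiberGap {E : Type*} [NormedAddCommGroup E] [InnerProductSpace ℝ E]
    [Finite ι] (hμ0 : ∀ θ, 0 ≤ μ θ) (hμ : Summable μ) {v : Θ → E} {φ : ι → E}
    (hlin : ∀ θ a, ℓ θ a = ⟪v θ, φ a⟫) (hlbar : ∀ a, lbar a = ∑' θ, μ θ * ℓ θ a) {C : ℝ}
    (hℓ : ∀ θ a, |ℓ θ a| ≤ C) (hC : ∀ θ b, |ℓ θ b - lbar b| ≤ C) :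
    ∃ u : ι → E, ∀ a b, ⟪u a, φ b⟫ = fiberGap μ f ℓ lbar a b := by
  obtain ⟨m, hm⟩ := exists_inner_eq_tsum_mul φ (fun θ => ⟨v θ, hlin θ⟩)
    fun a => summable_mul_of_abs_le hμ hμ0 (hℓ · a)
  choose u hu using fun a => exists_inner_eq_tsum_mul φ (w := (f ⁻¹' {a}).indicator μ)
    (x := fun θ b => lbar b - ℓ θ b)
    (fun θ => ⟨m - v θ, fun b => by rw [inner_sub_left, hm, ← hlin, hlbar]⟩)
    fun b => summable_mul_of_abs_le (hμ.indicator _)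
      (fun θ => indicator_nonneg (fun θ _ => hμ0 θ) θ) fun θ => by
        rw [abs_sub_comm]; exact hC θ b
  exact ⟨u, hu⟩

variable [Fintype ι]

lemma regret_eq_sum_fiberGap (hμ0 : ∀ θ, 0 ≤ μ θ) (hμ1 : HasSum μ 1) {C : ℝ}
    (hℓ : ∀ θ a, |ℓ θ a| ≤ C) (hlbar : ∀ a, lbar a = ∑' θ, μ θ * ℓ θ a) :
    ∑' θ, ∑' θ', μ θ * μ θ' * (ℓ θ (f θ') - ℓ θ (f θ)) = ∑ a, fiberGap μ f ℓ lbar a a := by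
  have hμ := hμ1.summable
  have hsℓ : ∀ a, Summable fun θ => μ θ * ℓ θ a :=
    fun a => summable_mul_of_abs_le hμ hμ0 (hℓ · a)
  have hsf : Summable fun θ => μ θ * ℓ θ (f θ) :=
    summable_mul_of_abs_le hμ hμ0 fun θ => hℓ θ (f θ)
  have hcol : ∀ b, ∑' θ, μ θ * (ℓ θ b - ℓ θ (f θ)) = lbar b - ∑' θ, μ θ * ℓ θ (f θ) := by
    intro b
    simp_rw [mul_sub]
    rw [(hsℓ b).tsum_sub hsf, hlbar]
  rw [tsum_tsum_mul_mul_comp hμ (F := fun θ b => ℓ θ b - ℓ θ (f θ))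
    fun b => ((hsℓ b).sub hsf).congr fun θ => (mul_sub _ _ _).symm]
  simp_rw [hcol, mul_sub, sum_sub_distrib, ← sum_mul, sum_fiberMass hμ1, one_mul,
    tsum_mul_apply_eq_sum_tsum_indicator f hsℓ, ← sum_sub_distrib]
  refine sum_congr rfl fun a _ => ?_
  simp_rw [fiberGap, mul_sub]
  rw [Summable.tsum_sub ((hμ.indicator _).mul_right _) (summable_mul_of_abs_le (hμ.indicator _)
    (fun θ => indicator_nonneg (fun θ _ => hμ0 θ) θ) (hℓ · a)), tsum_mul_right, fiberMass]

lemma sum_fiber_variance (hμ0 : ∀ θ, 0 ≤ μ θ) (hμ : Summable μ) {C : ℝ}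
    (hC : ∀ θ b, |ℓ θ b - lbar b| ≤ C) (b : ι) :
    ∑ a, ∑' θ, (f ⁻¹' {a}).indicator μ θ * (ℓ θ b - lbar b) ^ 2 =
      ∑' θ, μ θ * (ℓ θ b - lbar b) ^ 2 :=
  (tsum_mul_apply_eq_sum_tsum_indicator f (h := fun θ _ => (ℓ θ b - lbar b) ^ 2) fun _ =>
    summable_mul_of_abs_le hμ hμ0 (C := C ^ 2) fun θ => by
      rw [abs_pow]; exact pow_le_pow_left₀ (abs_nonneg _) (hC θ b) 2).symm

lemma sum_div_fiberMass_le_variance (hμ0 : ∀ θ, 0 ≤ μ θ) (hμ : Summable μ) {C : ℝ}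
    (hC : ∀ θ b, |ℓ θ b - lbar b| ≤ C) :
    ∑ a, (∑ b, fiberMass μ f b * fiberGap μ f ℓ lbar a b ^ 2) / fiberMass μ f a ≤
      ∑ b, fiberMass μ f b * ∑' θ, μ θ * (ℓ θ b - lbar b) ^ 2 := by
  calc _ ≤ ∑ a, ∑ b,
        fiberMass μ f b * ∑' θ, (f ⁻¹' {a}).indicator μ θ * (ℓ θ b - lbar b) ^ 2 := by
        refine sum_le_sum fun a _ => ?_
        rw [sum_div]
        refine sum_le_sum fun b _ => ?_
        rw [mul_div_assoc]
        refine mul_le_mul_of_nonneg_left (div_le_of_le_mul₀ (fiberMass_nonneg f hμ0 a)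
          (tsum_nonneg fun θ => mul_nonneg (indicator_nonneg (fun θ _ => hμ0 θ) θ) (sq_nonneg _))
          ?_) (fiberMass_nonneg f hμ0 b)
        rw [mul_comm]
        exact fiberGap_sq_le hμ0 hμ hC a b
    _ = _ := by
        rw [sum_comm]
        simp_rw [← mul_sum, sum_fiber_variance hμ0 hμ hC]

lemma two_mul_variance_le_infoGain (hμ0 : ∀ θ, 0 ≤ μ θ) (hμ : Summable μ)
    (hℓ : ∀ θ a, ℓ θ a ∈ Icc (0 : ℝ) 1) (hlbar01 : ∀ a, lbar a ∈ Ioo (0 : ℝ) 1) :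
    2 * ∑ b, fiberMass μ f b * ∑' θ, μ θ * (ℓ θ b - lbar b) ^ 2 ≤
      ∑' θ, ∑' θ', μ θ * μ θ' * binRelEnt (ℓ θ (f θ')) (lbar (f θ')) := by
  have hpinsker := fun θ b => two_mul_sq_sub_le_binRelEnt (hℓ θ b) (hlbar01 b)
  have hsg : ∀ b, Summable fun θ => μ θ * binRelEnt (ℓ θ b) (lbar b) := fun b =>
    summable_mul_of_abs_le hμ hμ0 fun θ => by
      rw [abs_of_nonneg ((by positivity : (0 : ℝ) ≤ 2 * _).trans (hpinsker θ b))]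
      exact binRelEnt_le_inv_add_inv (hℓ θ b) (hlbar01 b)
  have hsv : ∀ b, Summable fun θ => μ θ * (2 * (ℓ θ b - lbar b) ^ 2) := fun b =>
    summable_mul_of_abs_le hμ hμ0 (C := 2) fun θ => by
      have h1 := hℓ θ b; have h2 := hlbar01 b
      rw [abs_of_nonneg (by positivity)]
      nlinarith [h1.1, h1.2, h2.1, h2.2]
  rw [tsum_tsum_mul_mul_comp hμ hsg, mul_sum]
  refine sum_le_sum fun b _ => ?_
  rw [mul_left_comm, ← tsum_mul_left]
  refine mul_le_mul_of_nonneg_left ?_ (fiberMass_nonneg f hμ0 b)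
  refine ((hsv b).congr fun θ => by ring).tsum_le_tsum (fun θ => ?_) (hsg b)
  rw [mul_left_comm]
  exact mul_le_mul_of_nonneg_left (hpinsker θ b) (hμ0 θ)

end OneRound

theorem sq_regret_le_half_d_mul_infoGain_general
    {Θ : Type*} {K d : ℕ}
    (μ : Θ → ℝ) (hμ0 : ∀ θ, 0 ≤ μ θ) (hμ1 : HasSum μ 1)
    (ℓ : Θ → Fin K → ℝ) (hℓ : ∀ θ a, ℓ θ a ∈ Set.Icc (0 : ℝ) 1)
    (v : Θ → EuclideanSpace ℝ (Fin d)) (φ : Fin K → EuclideanSpace ℝ (Fin d))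
    (hlin : ∀ θ a, ℓ θ a = (inner ℝ (v θ) (φ a) : ℝ))
    (astar : Θ → Fin K)
    (lbar : Fin K → ℝ) (hlbar : ∀ a, lbar a = ∑' θ, μ θ * ℓ θ a)
    (hlbar01 : ∀ a, lbar a ∈ Set.Ioo (0 : ℝ) 1)
    (R I : ℝ)
    (hR : R = ∑' θ, ∑' θ', μ θ * μ θ' * (ℓ θ (astar θ') - ℓ θ (astar θ)))
    (hI : I = ∑' θ, ∑' θ',
      μ θ * μ θ' * binRelEnt (ℓ θ (astar θ')) (lbar (astar θ'))) :
    R ^ 2 ≤ ((d : ℝ) / 2) * I := by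
  have hμ := hμ1.summable
  have hℓC : ∀ θ a, |ℓ θ a| ≤ 1 := fun θ a => abs_le.2 ⟨by linarith [(hℓ θ a).1], (hℓ θ a).2⟩
  have hgapC : ∀ θ a, |ℓ θ a - lbar a| ≤ 1 := fun θ a => abs_le.2
    ⟨by linarith [(hℓ θ a).1, (hlbar01 a).2], by linarith [(hℓ θ a).2, (hlbar01 a).1]⟩
  obtain ⟨u, hu⟩ := exists_inner_eq_fiberGap (f := astar) hμ0 hμ hlin hlbar hℓC hgapC
  have hdiag : ∀ a, fiberMass μ astar a = 0 → ⟪u a, φ a⟫ = 0 := fun a ha => by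
    rw [hu, fiberGap_eq_zero_of_fiberMass_eq_zero hμ0 hμ hgapC ha]
  calc R ^ 2 = (∑ a, ⟪u a, φ a⟫) ^ 2 := by
        simp only [hR, regret_eq_sum_fiberGap hμ0 hμ1 hℓC hlbar, hu]
    _ ≤ d * ∑ a, (∑ b, fiberMass μ astar b * ⟪u a, φ b⟫ ^ 2) / fiberMass μ astar a := by
        simpa using sq_sum_inner_le_finrank_mul (fiberMass_nonneg astar hμ0) u hdiag
    _ ≤ d * ∑ b, fiberMass μ astar b * ∑' θ, μ θ * (ℓ θ b - lbar b) ^ 2 := by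
        simp only [hu]
        exact mul_le_mul_of_nonneg_left (sum_div_fiberMass_le_variance hμ0 hμ hgapC)
          d.cast_nonneg
    _ ≤ d / 2 * I := by
        have := two_mul_variance_le_infoGain hμ0 hμ hℓ hlbar01 (f := astar)
        rw [hI]
        nlinarith [(Nat.cast_nonneg d : (0 : ℝ) ≤ d)]

/-- One-round Thompson sampling with `d`-dimensional linear expected losses
taking values in `[0,1]`: `R² ≤ (d/2) I`, i.e. the lifted information ratio is
at most `d/2`. -/
theorem sq_regret_le_half_d_mul_infoGain
    {Θ : Type*} [Countable Θ] {K d : ℕ} (hK : 1 ≤ K)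
    (μ : Θ → ℝ) (hμ0 : ∀ θ, 0 ≤ μ θ) (hμ1 : HasSum μ 1)
    (ℓ : Θ → Fin K → ℝ) (hℓ : ∀ θ a, ℓ θ a ∈ Set.Icc (0 : ℝ) 1)
    (v : Θ → EuclideanSpace ℝ (Fin d)) (φ : Fin K → EuclideanSpace ℝ (Fin d))
    (hlin : ∀ θ a, ℓ θ a = (inner ℝ (v θ) (φ a) : ℝ))
    (astar : Θ → Fin K)
    (lbar : Fin K → ℝ) (hlbar : ∀ a, lbar a = ∑' θ, μ θ * ℓ θ a)
    (hlbar01 : ∀ a, lbar a ∈ Set.Ioo (0 : ℝ) 1)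
    (R I : ℝ)
    (hR : R = ∑' θ, ∑' θ', μ θ * μ θ' * (ℓ θ (astar θ') - ℓ θ (astar θ)))
    (hI : I = ∑' θ, ∑' θ',
      μ θ * μ θ' * binRelEnt (ℓ θ (astar θ')) (lbar (astar θ'))) :
    R ^ 2 ≤ ((d : ℝ) / 2) * I :=
  sq_regret_le_half_d_mul_infoGain_general μ hμ0 hμ1 ℓ hℓ v φ hlin astar lbar hlbar hlbar01 R I hR
    hI
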